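/- arXiv:2312.16239 — 3 statements merged into one kernel-verified Lean document; each statement's English description precedes it below -/
import Mathlib

section
/- There exists a renaming set X, an element x ∈ X, and a renaming ρ such that ρ·supp(x) is not a subset of supp(ρ·x). -/
abbrev Atom := ℕ

def RenMonoid : Submonoid (Function.End Atom) where
  carrier := {ρ | {a | ρ a ≠ a}.Finite}
  one_mem' := Set.Finite.subset Set.finite_empty (fun _ ha => (ha rfl).elim)
  mul_mem' := by
    intro ρ ρ' hρ hρ'
    refine Set.Finite.subset (Set.Finite.union hρ hρ') fun a ha => ?_
    by_contra h
    simp only [Set.mem_union, Set.mem_setOf_eq, not_or, not_not] at h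
    exact ha (show ρ (ρ' a) = a by rw [h.2, h.1])

abbrev Ren : Type := RenMonoid

def rdom (ρ : Ren) : Set Atom := {a | ρ.1 a ≠ a}
def rimg (ρ : Ren) : Set Atom := ρ.1 '' rdom ρ
def rnontriv (ρ : Ren) : Set Atom := rdom ρ ∪ rimg ρ

def RSupports {X : Type*} [MulAction Ren X] (A : Set Atom) (x : X) : Prop :=
  ∀ ρ ρ' : Ren, (∀ a ∈ A, ρ.1 a = ρ'.1 a) → ρ • x = ρ' • x

def RIsLeastSupport {X : Type*} [MulAction Ren X] (S : Set Atom) (x : X) : Prop :=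
  RSupports S x ∧ ∀ A, RSupports A x → S ⊆ A

def IsPermissionSet (S : Set Atom) : Prop :=
  ∃ A B : Finset Atom, (↑A : Set Atom) ⊆ {n | n % 2 = 1} ∧ (↑B : Set Atom) ⊆ {n | n % 2 = 0} ∧
    S = ({n : Atom | n % 2 = 0} ∪ ↑A) \ ↑B

def atomRen (a b : Atom) : Ren :=
  ⟨fun c => if c = a then b else c, by
    show {c | (if c = a then b else c) ≠ c}.Finite
    apply Set.Finite.subset (Set.finite_singleton a)
    intro c hc
    by_contra hn
    simp only [Set.mem_singleton_iff] at hn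
    exact hc (by simp [if_neg hn])⟩

def FunSupportedBy {X Y : Type*} [MulAction Ren X] [MulAction Ren Y]
    (S : Set Atom) (f : X → Y) : Prop :=
  ∀ (ρ : Ren) (x : X), rdom ρ ∩ S = ∅ → ρ • f x = f (ρ • x)

def FreshPair (ρ₁ ρ₂ : Ren) (A S : Set Atom) : Prop :=
  rdom ρ₁ = A ∧ rdom ρ₂ = rimg ρ₁ ∧ (∀ a ∈ A, ρ₂.1 (ρ₁.1 a) = a) ∧
    rdom ρ₂ ∩ (S ∪ A) = ∅

instance : SMul Ren Atom := ⟨fun ρ a => ρ.1 a⟩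
instance : MulAction Ren Atom where
  one_smul _ := rfl
  mul_smul _ _ _ := rfl

def RSupportsOn {X : Type*} (act : Ren → X → X) (A : Set Atom) (x : X) : Prop :=
  ∀ ρ ρ' : Ren, (∀ a ∈ A, ρ.1 a = ρ'.1 a) → act ρ x = act ρ' x

/-!
The exploding action on `Option (Atom × Atom)` (with `none` playing the role of `*`) lets the pair
`(a, b)`, `a ≠ b`, have least support `{a, b}`, while `[a ↦ b]` collapses it to `*`, whose least
support is empty; so the image `{b}` of the support is not contained in the new support.
-/

section Explode

variable {α : Type*} [DecidableEq α]

def explode (f : α → α) : Option (α × α) → Option (α × α)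
  | none => none
  | some (a, b) => if a ≠ b ∧ f a = f b then none else some (f a, f b)

theorem explode_id (p : Option (α × α)) : explode id p = p := by
  rcases p with _ | ⟨a, b⟩
  · rfl
  · by_cases h : a = b <;> simp [explode, h]

theorem explode_comp (f g : α → α) (p : Option (α × α)) :
    explode (f ∘ g) p = explode f (explode g p) := by
  rcases p with _ | ⟨a, b⟩
  · rfl
  by_cases hab : a = b
  · simp [explode, hab]
  by_cases hg : g a = g b
  · simp [explode, hab, hg]
  · by_cases hf : f (g a) = f (g b) <;> simp [explode, hab, hg, hf]

theorem explode_pair_of_ne_of_eq {f : α → α} {a b : α} (hab : a ≠ b) (hf : f a = f b) :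
    explode f (some (a, b)) = none := by
  simp [explode, hab, hf]

theorem explode_pair_congr {f g : α → α} {a b : α} (ha : f a = g a) (hb : f b = g b) :
    explode f (some (a, b)) = explode g (some (a, b)) := by
  simp [explode, ha, hb]

end Explode

def explodeAct (ρ : Ren) : Option (Atom × Atom) → Option (Atom × Atom) := explode ρ.1

theorem atomRen_apply_self (a b : Atom) : (atomRen a b).1 a = b := if_pos rfl

theorem atomRen_apply_of_ne {a c : Atom} (b : Atom) (hc : c ≠ a) : (atomRen a b).1 c = c :=
  if_neg hc

theorem rsupportsOn_explodeAct_pair (a b : Atom) : RSupportsOn explodeAct {a, b} (some (a, b)) :=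
  fun _ _ h => explode_pair_congr (h a (by simp)) (h b (by simp))

theorem rsupportsOn_explodeAct_none (S : Set Atom) : RSupportsOn explodeAct S none :=
  fun _ _ _ => rfl

-- `ρ` agrees with `1` on `A`, yet `ρ` explodes `(a, b)` while `1` fixes it.
theorem not_rsupportsOn_explodeAct_pair {a b : Atom} (hab : a ≠ b) {ρ : Ren} (hρ : ρ.1 a = ρ.1 b)
    {A : Set Atom} (hA : ∀ c ∈ A, ρ.1 c = c) :
    ¬ RSupportsOn explodeAct A (some (a, b)) := fun hsupp =>
  Option.some_ne_none _ <|
    ((explode_pair_of_ne_of_eq hab hρ).symm.trans ((hsupp ρ 1 hA).trans (explode_id _))).symm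

theorem pair_subset_of_rsupportsOn_explodeAct_pair {a b : Atom} (hab : a ≠ b) {A : Set Atom}
    (hA : RSupportsOn explodeAct A (some (a, b))) : {a, b} ⊆ A := by
  rintro c (rfl | rfl) <;> by_contra hcA
  · exact not_rsupportsOn_explodeAct_pair hab
      ((atomRen_apply_self c b).trans (atomRen_apply_of_ne b hab.symm).symm)
      (fun d hd => atomRen_apply_of_ne b (ne_of_mem_of_not_mem hd hcA)) hA
  · exact not_rsupportsOn_explodeAct_pair hab
      ((atomRen_apply_of_ne a hab).trans (atomRen_apply_self c a).symm)
      (fun d hd => atomRen_apply_of_ne a (ne_of_mem_of_not_mem hd hcA)) hA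

theorem stmt3 : ∃ (X : Type) (act : Ren → X → X),
    (∀ x, act 1 x = x) ∧ (∀ ρ ρ' x, act (ρ * ρ') x = act ρ (act ρ' x)) ∧
    ∃ (x : X) (ρ : Ren) (S S' : Set Atom),
      RSupportsOn act S x ∧ (∀ A, RSupportsOn act A x → S ⊆ A) ∧
      RSupportsOn act S' (act ρ x) ∧ (∀ A, RSupportsOn act A (act ρ x) → S' ⊆ A) ∧
      ¬ (ρ.1 '' S ⊆ S') := by
  have h01 : (0 : Atom) ≠ 1 := zero_ne_one
  have hexplode : explodeAct (atomRen 0 1) (some (0, 1)) = none :=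
    explode_pair_of_ne_of_eq h01 (atomRen_apply_self 0 1)
  refine ⟨_, explodeAct, fun _ => explode_id _, fun ρ ρ' => explode_comp ρ.1 ρ'.1,
    some (0, 1), atomRen 0 1, {0, 1}, ∅, rsupportsOn_explodeAct_pair 0 1,
    fun _ => pair_subset_of_rsupportsOn_explodeAct_pair h01, ?_, fun A _ => Set.empty_subset A, ?_⟩
  · exact hexplode ▸ rsupportsOn_explodeAct_none ∅
  · exact fun h => ((Set.insert_nonempty 0 {1}).image _).ne_empty (Set.subset_empty_iff.1 h)
end

section
/- If f : X → Y between supported renaming sets is supported in the sense that there is a permission set S_f with ρ·f(x) = f(ρ·x) whenever dom(ρ) ∩ S_f = ∅, then f, as an element of the function renaming set with the action (ρ·f)(x) = (ρ₂∘ρ)·f(ρ₁·x) for a freshening pair (ρ₁,ρ₂), is supported by S_f in the sense of the renaming-set support definition (any two renamings agreeing on S_f act equally on f). -/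
/-!
Write `A = nontriv ρ`, `B = img ρ₁` and `T = supp x`. The least support of `f(ρ₁·x)` lies in
`S_f ∪ ρ₁(T)`, where `ρ₂ ∘ ρ` acts as `ρ` on `S_f` and as the inverse of `ρ₁` on `ρ₁(T)`.
The value does not change when `ρ` is replaced by a renaming `σ` that agrees with `ρ` on `S_f`
and has `nontriv σ ⊆ A`, with any freshening pair `(σ₁, σ₂)`: the restriction `π` of `σ₁ ∘ ρ₂`
to `B` avoids `S_f` and sends `ρ₁·x` to `σ₁·x`, so `f(σ₁·x) = π·f(ρ₁·x)`, and `σ₂ ∘ σ ∘ π`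
agrees with `ρ₂ ∘ ρ` on `S_f ∪ ρ₁(T)`. Two renamings agreeing on `S_f` have the same restriction
to `S_f`, which is such a `σ` for both, and restricting the given freshening pairs yields
freshening pairs for it.
-/

lemma Ren.mul_apply (ρ σ : Ren) (a : Atom) : (ρ * σ).1 a = ρ.1 (σ.1 a) := rfl

lemma rdom_finite (ρ : Ren) : (rdom ρ).Finite := ρ.2

lemma Ren.apply_of_notMem_rnontriv {ρ : Ren} {a : Atom} (ha : a ∉ rnontriv ρ) : ρ.1 a = a :=
  not_not.mp fun hd => ha (Or.inl hd)

lemma Ren.apply_mem_rnontriv {ρ : Ren} {a : Atom} (ha : a ∈ rnontriv ρ) :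
    ρ.1 a ∈ rnontriv ρ := by
  by_cases hd : a ∈ rdom ρ
  · exact Or.inr ⟨a, hd, rfl⟩
  · rwa [not_not.mp hd]

open Classical in
noncomputable def Ren.restrict (σ : Ren) (P : Set Atom) : Ren :=
  ⟨fun a => if a ∈ P then σ.1 a else a,
    (rdom_finite σ).subset fun a ha => by
      by_cases hP : a ∈ P
      · simpa [rdom, hP] using ha
      · simp [hP] at ha⟩

section Restrict

variable (σ : Ren) (P : Set Atom) {a : Atom}

lemma Ren.restrict_apply_of_mem (ha : a ∈ P) : (σ.restrict P).1 a = σ.1 a :=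
  if_pos ha

lemma Ren.restrict_apply_of_notMem (ha : a ∉ P) : (σ.restrict P).1 a = a :=
  if_neg ha

lemma Ren.rdom_restrict : rdom (σ.restrict P) = rdom σ ∩ P := by
  ext a
  by_cases ha : a ∈ P
  · simp [rdom, Ren.restrict_apply_of_mem σ P ha, ha]
  · simp [rdom, Ren.restrict_apply_of_notMem σ P ha, ha]

lemma Ren.rimg_restrict : rimg (σ.restrict P) = σ.1 '' (rdom σ ∩ P) := by
  rw [rimg, Ren.rdom_restrict]
  exact Set.image_congr fun a ha => Ren.restrict_apply_of_mem σ P ha.2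

lemma Ren.rnontriv_restrict_subset : rnontriv (σ.restrict P) ⊆ rnontriv σ := by
  rw [rnontriv, rnontriv, Ren.rdom_restrict, Ren.rimg_restrict]
  exact Set.union_subset_union Set.inter_subset_left
    (Set.image_mono Set.inter_subset_left)

lemma Ren.restrict_eq_of_eqOn {τ : Ren} (h : Set.EqOn σ.1 τ.1 P) :
    σ.restrict P = τ.restrict P := by
  refine Subtype.ext (funext fun a => ?_)
  by_cases ha : a ∈ P
  · exact (Ren.restrict_apply_of_mem σ P ha).trans
      ((h ha).trans (Ren.restrict_apply_of_mem τ P ha).symm)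
  · exact (Ren.restrict_apply_of_notMem σ P ha).trans
      (Ren.restrict_apply_of_notMem τ P ha).symm

end Restrict

namespace FreshPair

variable {ρ ρ₁ ρ₂ : Ren} {A S : Set Atom} {a : Atom}

lemma fst_apply_of_notMem (h : FreshPair ρ₁ ρ₂ A S) (ha : a ∉ A) : ρ₁.1 a = a :=
  not_not.mp fun hd => ha (h.1 ▸ hd)

lemma fst_apply_mem_rimg (h : FreshPair ρ₁ ρ₂ A S) (ha : a ∈ A) : ρ₁.1 a ∈ rimg ρ₁ :=
  ⟨a, h.1 ▸ ha, rfl⟩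

lemma snd_fst_apply (h : FreshPair ρ₁ ρ₂ A S) (ha : a ∈ A) : ρ₂.1 (ρ₁.1 a) = a :=
  h.2.2.1 a ha

lemma notMem_of_mem_rimg (h : FreshPair ρ₁ ρ₂ A S) (ha : a ∈ rimg ρ₁) : a ∉ S ∪ A :=
  fun hSA => Set.eq_empty_iff_forall_notMem.mp h.2.2.2 a ⟨h.2.1 ▸ ha, hSA⟩

lemma snd_apply_of_notMem_rimg (h : FreshPair ρ₁ ρ₂ A S) (ha : a ∉ rimg ρ₁) : ρ₂.1 a = a :=
  not_not.mp fun hd => ha (h.2.1 ▸ hd)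

lemma snd_apply_of_mem (h : FreshPair ρ₁ ρ₂ A S) (ha : a ∈ S ∪ A) : ρ₂.1 a = a :=
  h.snd_apply_of_notMem_rimg fun hB => h.notMem_of_mem_rimg hB ha

lemma restrict {A' : Set Atom} (h : FreshPair ρ₁ ρ₂ A S) (hA' : A' ⊆ A) :
    FreshPair (ρ₁.restrict A') (ρ₂.restrict (ρ₁.1 '' A')) A' S := by
  have himg : ρ₁.1 '' A' ⊆ rimg ρ₁ := Set.image_mono (h.1 ▸ hA')
  refine ⟨?_, ?_, fun a ha => ?_, ?_⟩
  · rw [Ren.rdom_restrict, h.1, Set.inter_eq_right.mpr hA']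
  · rw [Ren.rdom_restrict, Ren.rimg_restrict, h.2.1, h.1, Set.inter_eq_right.mpr hA',
      Set.inter_eq_right.mpr himg]
  · rw [Ren.restrict_apply_of_mem _ _ ha]
    exact (Ren.restrict_apply_of_mem ρ₂ (ρ₁.1 '' A') ⟨a, ha, rfl⟩).trans (h.snd_fst_apply (hA' ha))
  · refine Set.eq_empty_of_subset_empty (h.2.2.2 ▸ ?_)
    rw [Ren.rdom_restrict]
    exact Set.inter_subset_inter Set.inter_subset_left (Set.union_subset_union_right _ hA')

lemma snd_apply_apply (h : FreshPair ρ₁ ρ₂ (rnontriv ρ) S) (ha : a ∈ S) :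
    ρ₂.1 (ρ.1 a) = ρ.1 a := by
  refine h.snd_apply_of_mem ?_
  by_cases hA : a ∈ rnontriv ρ
  · exact Or.inr (Ren.apply_mem_rnontriv hA)
  · rw [Ren.apply_of_notMem_rnontriv hA]
    exact Or.inl ha

lemma snd_apply_apply_fst (h : FreshPair ρ₁ ρ₂ (rnontriv ρ) S) (ha : a ∈ S) :
    ρ₂.1 (ρ.1 (ρ₁.1 a)) = a := by
  by_cases hA : a ∈ rnontriv ρ
  · have hfresh := h.notMem_of_mem_rimg (h.fst_apply_mem_rimg hA)
    rw [Ren.apply_of_notMem_rnontriv fun h' => hfresh (Or.inr h'), h.snd_fst_apply hA]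
  · rw [h.fst_apply_of_notMem hA, Ren.apply_of_notMem_rnontriv hA,
      h.snd_apply_of_mem (Or.inl ha)]

end FreshPair

section Supports

variable {X Y : Type*} [MulAction Ren X] [MulAction Ren Y]

lemma RSupports.mono {A B : Set Atom} {x : X} (h : RSupports A x) (hAB : A ⊆ B) :
    RSupports B x :=
  fun ρ ρ' hag => h ρ ρ' fun a ha => hag a (hAB ha)

lemma leastSupport_smul_subset (suppX : X → Set Atom) (hX : ∀ x, RIsLeastSupport (suppX x) x)
    (σ : Ren) (x : X) : suppX (σ • x) ⊆ σ.1 '' suppX x := by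
  refine (hX (σ • x)).2 _ fun τ τ' hag => ?_
  rw [← mul_smul, ← mul_smul]
  exact (hX x).1 _ _ fun a ha => hag _ (Set.mem_image_of_mem _ ha)

lemma rdom_atomRen_subset (a b : Atom) : rdom (atomRen a b) ⊆ {a} := by
  intro c hc
  by_contra hca
  exact hc (if_neg hca)

/-- An atom outside `S_f ∪ supp z` can be renamed arbitrarily in `f z`, so it cannot belong to
a least support of `f z`. -/
lemma leastSupport_apply_subset (suppX : X → Set Atom) (suppY : Y → Set Atom)
    (hX : ∀ x, RIsLeastSupport (suppX x) x) (hY : ∀ y, RIsLeastSupport (suppY y) y)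
    {f : X → Y} {Sf : Set Atom} (hf : FunSupportedBy Sf f) (z : X) :
    suppY (f z) ⊆ Sf ∪ suppX z := by
  intro a ha
  by_contra han
  rw [Set.mem_union, not_or] at han
  have hinv : ∀ c, atomRen a c • f z = f z := by
    intro c
    have hdisj : rdom (atomRen a c) ∩ Sf = ∅ := Set.eq_empty_of_forall_notMem
      fun d hd => han.1 ((rdom_atomRen_subset a c hd.1) ▸ hd.2)
    rw [hf _ _ hdisj, (hX z).1 (atomRen a c) 1 fun b hb => if_neg fun (hba : b = a) => han.2 (hba ▸ hb),
      one_smul]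
  have hsupp : RSupports (suppY (f z) \ {a}) (f z) := by
    intro σ σ' hag
    obtain ⟨c, hc⟩ := ((rdom_finite σ).union (rdom_finite σ')).exists_notMem
    rw [Set.mem_union, not_or] at hc
    have hagree : ∀ k ∈ suppY (f z), (σ * atomRen a c).1 k = (σ' * atomRen a c).1 k := by
      intro k hk
      by_cases hka : k = a
      · simp only [Ren.mul_apply, atomRen, hka, if_true]
        rw [not_not.mp hc.1, not_not.mp hc.2]
      · simp only [Ren.mul_apply, atomRen, hka, if_false]
        exact hag k ⟨hk, hka⟩
    rw [← hinv c, ← mul_smul, ← mul_smul, (hY (f z)).1 _ _ hagree]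
  exact ((hY (f z)).2 _ hsupp ha).2 rfl

lemma rsupports_apply_smul (suppX : X → Set Atom) (suppY : Y → Set Atom)
    (hX : ∀ x, RIsLeastSupport (suppX x) x) (hY : ∀ y, RIsLeastSupport (suppY y) y)
    {f : X → Y} {Sf : Set Atom} (hf : FunSupportedBy Sf f) (σ : Ren) (x : X) :
    RSupports (Sf ∪ σ.1 '' suppX x) (f (σ • x)) :=
  (hY _).1.mono fun _ hk =>
    (leastSupport_apply_subset suppX suppY hX hY hf _ hk).imp_right
      fun hk' => leastSupport_smul_subset suppX hX σ x hk'

lemma smul_apply_fresh_eq_of_eqOn {f : X → Y} {Sf T : Set Atom} (hf : FunSupportedBy Sf f)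
    {x : X} (hx : RSupports T x) {ρ ρ₁ ρ₂ σ σ₁ σ₂ : Ren}
    (hρ : FreshPair ρ₁ ρ₂ (rnontriv ρ) (T ∪ Sf)) (hσ : FreshPair σ₁ σ₂ (rnontriv σ) (T ∪ Sf))
    (hfx : RSupports (Sf ∪ ρ₁.1 '' T) (f (ρ₁ • x)))
    (hsub : rnontriv σ ⊆ rnontriv ρ) (hagree : Set.EqOn σ.1 ρ.1 Sf) :
    (ρ₂ * ρ) • f (ρ₁ • x) = (σ₂ * σ) • f (σ₁ • x) := by
  set π := (σ₁ * ρ₂).restrict (rimg ρ₁)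
  have hπ_fix : ∀ a ∈ T ∪ Sf, π.1 a = a := fun a ha =>
    Ren.restrict_apply_of_notMem _ _ fun hB => hρ.notMem_of_mem_rimg hB (Or.inl ha)
  have hπρ₁ : ∀ a ∈ T, π.1 (ρ₁.1 a) = σ₁.1 a := by
    intro a ha
    by_cases hA : a ∈ rnontriv ρ
    · rw [Ren.restrict_apply_of_mem _ _ (hρ.fst_apply_mem_rimg hA), Ren.mul_apply,
        hρ.snd_fst_apply hA]
    · rw [hρ.fst_apply_of_notMem hA, hπ_fix a (Or.inl ha),
        hσ.fst_apply_of_notMem fun h => hA (hsub h)]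
  have hπ_avoids : rdom π ∩ Sf = ∅ := Set.eq_empty_of_forall_notMem
    fun a ha => ha.1 (hπ_fix a (Or.inr ha.2))
  have hσx : f (σ₁ • x) = π • f (ρ₁ • x) := by
    rw [hf π _ hπ_avoids, ← mul_smul]
    exact congrArg f (hx _ _ fun a ha => (hπρ₁ a ha).symm)
  rw [hσx, ← mul_smul]
  refine hfx _ _ ?_
  rintro k (hk | ⟨a, ha, rfl⟩)
  · simp only [Ren.mul_apply]
    rw [hπ_fix k (Or.inr hk), hρ.snd_apply_apply (Or.inr hk), hσ.snd_apply_apply (Or.inr hk),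
      hagree hk]
  · simp only [Ren.mul_apply]
    rw [hπρ₁ a ha, hρ.snd_apply_apply_fst (Or.inl ha), hσ.snd_apply_apply_fst (Or.inl ha)]

end Supports

theorem stmt6_general {X Y : Type*} [MulAction Ren X] [MulAction Ren Y]
    (suppX : X → Set Atom) (suppY : Y → Set Atom)
    (hX : ∀ x, RIsLeastSupport (suppX x) x) (hY : ∀ y, RIsLeastSupport (suppY y) y)
    (f : X → Y) (Sf : Set Atom) (hf : FunSupportedBy Sf f)
    (ρ ρ' : Ren) (hagree : ∀ a ∈ Sf, ρ.1 a = ρ'.1 a) (x : X)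
    (ρ₁ ρ₂ : Ren) (h : FreshPair ρ₁ ρ₂ (rnontriv ρ) (suppX x ∪ Sf))
    (ρ₁' ρ₂' : Ren) (h' : FreshPair ρ₁' ρ₂' (rnontriv ρ') (suppX x ∪ Sf)) :
    (ρ₂ * ρ) • f (ρ₁ • x) = (ρ₂' * ρ') • f (ρ₁' • x) := by
  have hfx := rsupports_apply_smul suppX suppY hX hY hf
  have hρS : ρ'.restrict Sf = ρ.restrict Sf :=
    Ren.restrict_eq_of_eqOn ρ' Sf fun a ha => (hagree a ha).symm
  have hS := h.restrict (Ren.rnontriv_restrict_subset ρ Sf)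
  have hS' := h'.restrict (Ren.rnontriv_restrict_subset ρ' Sf)
  have hρ_eqOn : ∀ τ : Ren, Set.EqOn (τ.restrict Sf).1 τ.1 Sf := fun τ _ ha =>
    Ren.restrict_apply_of_mem τ Sf ha
  rw [smul_apply_fresh_eq_of_eqOn hf (hX x).1 h hS (hfx ρ₁ x)
      (Ren.rnontriv_restrict_subset ρ Sf) (hρ_eqOn ρ),
    smul_apply_fresh_eq_of_eqOn hf (hX x).1 h' hS' (hfx ρ₁' x)
      (Ren.rnontriv_restrict_subset ρ' Sf) (hρ_eqOn ρ')]
  rw [hρS] at hS' ⊢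
  exact smul_apply_fresh_eq_of_eqOn hf (hX x).1 hS hS' (hfx _ x) subset_rfl (Set.eqOn_refl _ _)

theorem stmt6 {X Y : Type*} [MulAction Ren X] [MulAction Ren Y]
    (suppX : X → Set Atom) (suppY : Y → Set Atom)
    (hX : ∀ x, RIsLeastSupport (suppX x) x) (hY : ∀ y, RIsLeastSupport (suppY y) y)
    (f : X → Y) (Sf : Set Atom) (hSf : IsPermissionSet Sf) (hf : FunSupportedBy Sf f)
    (ρ ρ' : Ren) (hagree : ∀ a ∈ Sf, ρ.1 a = ρ'.1 a) (x : X)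
    (ρ₁ ρ₂ : Ren) (h : FreshPair ρ₁ ρ₂ (rnontriv ρ) (suppX x ∪ Sf))
    (ρ₁' ρ₂' : Ren) (h' : FreshPair ρ₁' ρ₂' (rnontriv ρ') (suppX x ∪ Sf)) :
    (ρ₂ * ρ) • f (ρ₁ • x) = (ρ₂' * ρ') • f (ρ₁' • x) :=
  stmt6_general suppX suppY hX hY f Sf hf ρ ρ' hagree x ρ₁ ρ₂ h ρ₁' ρ₂' h'
end

section
/- For a supported renaming set X, x ∈ X, and atom a, the function λa.x mapping a to x and any other atom b to [a↦b]·x is a supported function from atoms to X, supported by supp(x). -/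
def lamFun {X : Type*} [MulAction Ren X] (a : Atom) (x : X) : Atom → X :=
  fun b => if b = a then x else atomRen a b • x

/-! Since `[a↦a] = 1`, `lamFun a x b = [a↦b] • x` for every `b`. If `ρ` fixes `supp x` pointwise,
then `ρ * [a↦b]` and `[a↦ρ b]` agree on `supp x`, so they act equally on `x`. -/

lemma atomRen_apply (a b c : Atom) : (atomRen a b).1 c = if c = a then b else c := rfl

lemma atomRen_self (a : Atom) : atomRen a a = 1 := by
  refine Subtype.ext (funext fun c => ?_)
  change (if c = a then a else c) = c
  split_ifs with h
  · exact h.symm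
  · rfl

lemma lamFun_eq_smul {X : Type*} [MulAction Ren X] (a : Atom) (x : X) (b : Atom) :
    lamFun a x b = atomRen a b • x := by
  unfold lamFun
  split_ifs with h
  · rw [h, atomRen_self, one_smul]
  · rfl

lemma apply_eq_self_of_rdom_inter_eq_empty {ρ : Ren} {S : Set Atom} (hρ : rdom ρ ∩ S = ∅)
    {s : Atom} (hs : s ∈ S) : ρ.1 s = s := by
  by_contra h
  exact (Set.eq_empty_iff_forall_notMem.mp hρ) s ⟨h, hs⟩

lemma RSupports.smul_atomRen_smul {X : Type*} [MulAction Ren X] {S : Set Atom} {x : X}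
    (hx : RSupports S x) {ρ : Ren} (hρ : rdom ρ ∩ S = ∅) (a b : Atom) :
    ρ • atomRen a b • x = atomRen a (ρ.1 b) • x := by
  rw [← mul_smul]
  refine hx _ _ fun s hs => ?_
  change ρ.1 ((atomRen a b).1 s) = (atomRen a (ρ.1 b)).1 s
  rw [atomRen_apply, atomRen_apply]
  split_ifs
  · rfl
  · exact apply_eq_self_of_rdom_inter_eq_empty hρ hs

theorem stmt10 {X : Type*} [MulAction Ren X] (x : X) (S : Set Atom)
    (hS : RIsLeastSupport S x) (a : Atom) :
    ∀ (ρ : Ren), rdom ρ ∩ S = ∅ → ∀ z : Atom, ρ • lamFun a x z = lamFun a x (ρ.1 z) := by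
  intro ρ hρ z
  rw [lamFun_eq_smul, lamFun_eq_smul]
  exact hS.1.smul_atomRen_smul hρ a z
end
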